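/- arXiv:1808.02333 — 2 statements merged into one kernel-verified Lean document; each statement's English description precedes it below -/
import Mathlib

section
/- Let G be an infinite, connected, locally finite simple graph on a countable vertex set V satisfying the sphere condition. Let D ≥ 2 be an integer and let η = (η_v)_{v∈V} be i.i.d. random variables, each uniformly distributed on {1, …, D}. Then for all distinct u, v ∈ V and every integer n ≥ 1, P( Z_{u,i}(η) = Z_{v,i}(η) for all 1 ≤ i ≤ n ) ≤ D^{−n}. -/
/-!
Induct on `n`. By the sphere condition there is `x` with `dist(x, v) = n + 1 < dist(x, u)`; let
`S` be the finite set of vertices other than `x` within distance `n + 1` of `u` or `v`. The event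
that the first `n` sphere sums agree depends only on `η|_S`. On the event that the first `n + 1`
agree, `η_x` is a function of `η|_S`: the sphere of radius `n + 1` about `u` lies in `S`, and `x`
is the only vertex of the sphere of radius `n + 1` about `v` outside `S`. As `η_x` is uniform and
independent of `η|_S`, each step costs a factor `D⁻¹`.
-/

open MeasureTheory ProbabilityTheory ENNReal

/-- `sphereSum G D η v n` is `Z_{v,n}(η) = ∑_{w : dist(w,v) = n} η_w`, where
`η : V → Fin D` encodes a configuration with values in `{1, …, D}` via
`w ↦ (η w : ℕ) + 1`. The sum is a finite sum (`finsum`) by local finiteness. -/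
noncomputable def sphereSum {V : Type*} (G : SimpleGraph V) {D : ℕ}
    (η : V → Fin D) (v : V) (n : ℕ) : ℕ :=
  ∑ᶠ w ∈ {w : V | G.dist w v = n}, ((η w : ℕ) + 1)

namespace SimpleGraph

variable {V : Type*} {G : SimpleGraph V}

theorem finite_setOf_edist_le [G.LocallyFinite] (c : V) (r : ℕ) :
    {w | G.edist w c ≤ r}.Finite := by
  induction r with
  | zero => simp [edist_eq_zero_iff]
  | succ r ih =>
    refine (ih.biUnion fun z _ ↦ ((G.neighborSet z).toFinite.insert z)).subset fun w hw ↦ ?_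
    obtain ⟨p, hp⟩ := G.exists_walk_of_edist_ne_top (ne_top_of_le_ne_top (by simp) hw)
    cases p with
    | nil => exact Set.mem_biUnion (x := c) (by simp) (Set.mem_insert c _)
    | cons hadj q =>
      refine Set.mem_biUnion ?_ (Set.mem_insert_of_mem _ hadj.symm)
      have hq : q.length ≤ r := by
        have : (q.length : ℕ∞) + 1 ≤ r + 1 := by simpa [← hp] using hw
        exact_mod_cast (ENat.add_le_add_iff_right ENat.one_ne_top).mp this
      exact (edist_le q).trans (by exact_mod_cast hq)

theorem Connected.finite_setOf_dist_le [G.LocallyFinite] (hconn : G.Connected) (c : V) (r : ℕ) :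
    {w | G.dist w c ≤ r}.Finite :=
  (finite_setOf_edist_le c r).subset fun w (hw : G.dist w c ≤ r) ↦
    show G.edist w c ≤ r by
      rw [← (hconn.preconnected w c).coe_dist_eq_edist]
      exact_mod_cast hw

end SimpleGraph

section SphereSum

variable {V : Type*} {G : SimpleGraph V} {D : ℕ} {η η' : V → Fin D}

theorem sphereSum_congr {p : V} {n : ℕ} (h : Set.EqOn η η' {w | G.dist w p = n}) :
    sphereSum G η p n = sphereSum G η' p n :=
  finsum_mem_congr rfl fun w hw ↦ by rw [h hw]

theorem eq_of_sphereSum_eq {p x : V} {n : ℕ} (hfin : {w | G.dist w p = n}.Finite)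
    (hx : G.dist x p = n) (h : Set.EqOn η η' ({w | G.dist w p = n} \ {x}))
    (hsum : sphereSum G η p n = sphereSum G η' p n) : η x = η' x := by
  have hsplit : ∀ η : V → Fin D, sphereSum G η p n =
      ((η x : ℕ) + 1) + ∑ᶠ w ∈ {w | G.dist w p = n} \ {x}, ((η w : ℕ) + 1) := fun η ↦ by
    rw [sphereSum, ← finsum_mem_insert (fun w ↦ (η w : ℕ) + 1)
      (fun hx' : x ∈ {w | G.dist w p = n} \ {x} ↦ hx'.2 rfl) hfin.sdiff,
      Set.insert_sdiff_singleton, Set.insert_eq_of_mem (s := {w | G.dist w p = n}) hx]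
  rw [hsplit, hsplit, finsum_mem_congr rfl fun w hw ↦ by rw [h hw]] at hsum
  exact Fin.ext (by omega)

end SphereSum

section Agreement

variable {V : Type*} (G : SimpleGraph V) {D : ℕ}

def SphereSumsAgree (η : V → Fin D) (u v : V) (n : ℕ) : Prop :=
  ∀ i : ℕ, 1 ≤ i → i ≤ n → sphereSum G η u i = sphereSum G η v i

variable {G} {η η' : V → Fin D} {u v x : V} {k : ℕ} {S : Set V}

theorem SphereSumsAgree.of_eqOn
    (hS : ∀ w ≠ x, G.dist w u ≤ k + 1 ∨ G.dist w v ≤ k + 1 → w ∈ S)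
    (hxv : G.dist x v = k + 1) (hxu : k + 1 < G.dist x u) (h : SphereSumsAgree G η' u v k)
    (hη : Set.EqOn η η' S) : SphereSumsAgree G η u v k := by
  intro i hi hik
  rw [sphereSum_congr (hη.mono fun w (hw : G.dist w u = i) ↦ hS w ?_ (.inl (by omega))),
    sphereSum_congr (hη.mono fun w (hw : G.dist w v = i) ↦ hS w ?_ (.inr (by omega)))]
  · exact h i hi hik
  all_goals rintro rfl; omega

theorem SphereSumsAgree.eq_of_eqOn
    (hS : ∀ w ≠ x, G.dist w u ≤ k + 1 ∨ G.dist w v ≤ k + 1 → w ∈ S)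
    (hxv : G.dist x v = k + 1) (hxu : k + 1 < G.dist x u)
    (hfin : {w | G.dist w v = k + 1}.Finite)
    (h : SphereSumsAgree G η u v (k + 1)) (h' : SphereSumsAgree G η' u v (k + 1))
    (hη : Set.EqOn η η' S) : η x = η' x := by
  refine eq_of_sphereSum_eq hfin hxv (hη.mono fun w hw ↦ hS w hw.2 (.inr hw.1.le)) ?_
  calc sphereSum G η v (k + 1) = sphereSum G η u (k + 1) := (h _ k.succ_pos le_rfl).symm
    _ = sphereSum G η' u (k + 1) :=
      sphereSum_congr (hη.mono fun w (hw : G.dist w u = k + 1) ↦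
        hS w (by rintro rfl; omega) (.inl hw.le))
    _ = sphereSum G η' v (k + 1) := h' _ k.succ_pos le_rfl

end Agreement

theorem measure_le_mul_measure_preimage_image {Ω β γ : Type*} [MeasurableSpace Ω]
    {P : Measure Ω} [MeasurableSpace β] [MeasurableSingletonClass β] [MeasurableSpace γ]
    [MeasurableSingletonClass γ] [Countable γ] {X : Ω → β} {Y : Ω → γ} (hY : Measurable Y)
    (hXY : IndepFun X Y P) {c : ℝ≥0∞} (hc : ∀ b, P (X ⁻¹' {b}) ≤ c) {E : Set Ω}
    (hE : ∀ ω ∈ E, ∀ ω' ∈ E, Y ω = Y ω' → X ω = X ω') :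
    P E ≤ c * P (Y ⁻¹' (Y '' E)) := by
  choose ω₀ hω₀E hω₀ using fun y : Y '' E ↦ y.2
  have hcover : E ⊆ ⋃ y : Y '' E, X ⁻¹' {X (ω₀ y)} ∩ Y ⁻¹' {y.1} := fun ω hω ↦
    let y : Y '' E := ⟨Y ω, ω, hω, rfl⟩
    Set.mem_iUnion.2 ⟨y, hE ω hω _ (hω₀E y) (hω₀ y).symm, rfl⟩
  calc P E ≤ ∑' y : Y '' E, P (X ⁻¹' {X (ω₀ y)} ∩ Y ⁻¹' {y.1}) :=
        (measure_mono hcover).trans (measure_iUnion_le _)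
    _ ≤ ∑' y : Y '' E, c * P (Y ⁻¹' {y.1}) := ENNReal.tsum_le_tsum fun y ↦ by
        rw [hXY.measure_inter_preimage_eq_mul _ _ (measurableSet_singleton _)
          (measurableSet_singleton _)]
        gcongr
        exact hc _
    _ = c * P (Y ⁻¹' (Y '' E)) := by
        rw [ENNReal.tsum_mul_left, tsum_measure_preimage_singleton (Set.to_countable _)
          fun y _ ↦ hY (measurableSet_singleton y)]

theorem measure_sphereSumsAgree_succ_le {V : Type*} {G : SimpleGraph V} (hconn : G.Connected)
    [G.LocallyFinite] {D : ℕ} {Ω : Type*} [MeasurableSpace Ω] {P : Measure Ω}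
    {η : V → Ω → Fin D} (hmeas : ∀ v, Measurable (η v)) (hindep : iIndepFun η P)
    (hunif : ∀ (v : V) (s : Fin D), P {ω | η v ω = s} = (D : ℝ≥0∞)⁻¹)
    {u v x : V} {k : ℕ} (hxv : G.dist x v = k + 1) (hxu : k + 1 < G.dist x u) :
    P {ω | SphereSumsAgree G (η · ω) u v (k + 1)} ≤
      (D : ℝ≥0∞)⁻¹ * P {ω | SphereSumsAgree G (η · ω) u v k} := by
  classical
  let S : Finset V := ((hconn.finite_setOf_dist_le u (k + 1)).union
    (hconn.finite_setOf_dist_le v (k + 1))).toFinset.erase x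
  have hS : ∀ w ≠ x, G.dist w u ≤ k + 1 ∨ G.dist w v ≤ k + 1 → w ∈ (S : Set V) :=
    fun w hwx hw ↦ by simpa [S, hwx] using hw
  let Y : Ω → S → Fin D := fun ω j ↦ η j ω
  have hY : Measurable Y := measurable_pi_lambda _ fun j ↦ hmeas j
  have hind : IndepFun (η x) Y P :=
    (hindep.indepFun_finset {x} S (by simp [S]) hmeas).comp (ψ := id)
      (φ := fun f : ({x} : Finset V) → Fin D ↦ f ⟨x, Finset.mem_singleton_self x⟩)
      (measurable_pi_apply _) measurable_id
  have hEqOn : ∀ ω ω', Y ω = Y ω' → Set.EqOn (η · ω) (η · ω') S :=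
    fun ω ω' h w hw ↦ congr_fun h ⟨w, hw⟩
  have hfin : {w | G.dist w v = k + 1}.Finite :=
    (hconn.finite_setOf_dist_le v (k + 1)).subset fun _ ↦ le_of_eq
  calc _ ≤ (D : ℝ≥0∞)⁻¹ * P (Y ⁻¹' (Y '' {ω | SphereSumsAgree G (η · ω) u v (k + 1)})) :=
        measure_le_mul_measure_preimage_image hY hind (fun b ↦ (hunif x b).le)
          fun ω hω ω' hω' h ↦ SphereSumsAgree.eq_of_eqOn hS hxv hxu hfin hω hω' (hEqOn ω ω' h)
    _ ≤ _ := by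
        gcongr
        rintro ω ⟨ω', hω', h⟩
        exact SphereSumsAgree.of_eqOn hS hxv hxu (fun i hi hik ↦ hω' i hi (by omega))
          (hEqOn ω ω' h.symm)

theorem stmt8_general {V : Type*} (G : SimpleGraph V)
    (hconn : G.Connected) [G.LocallyFinite]
    (hsphere : ∀ u v : V, u ≠ v → ∀ r : ℕ, 1 ≤ r →
      ∃ w : V, G.dist w v = r ∧ r < G.dist w u)
    (D : ℕ)
    {Ω : Type*} [MeasurableSpace Ω] (P : Measure Ω) [IsProbabilityMeasure P]
    (η : V → Ω → Fin D)
    (hmeas : ∀ v : V, Measurable (η v))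
    (hindep : iIndepFun η P)
    (hunif : ∀ (v : V) (s : Fin D), P {ω | η v ω = s} = (D : ℝ≥0∞)⁻¹)
    (u v : V) (huv : u ≠ v) (n : ℕ) :
    P {ω | ∀ i : ℕ, 1 ≤ i → i ≤ n →
        sphereSum G (fun w => η w ω) u i = sphereSum G (fun w => η w ω) v i}
      ≤ (D : ℝ≥0∞)⁻¹ ^ n := by
  change P {ω | SphereSumsAgree G (η · ω) u v n} ≤ _
  induction n with
  | zero => simpa using prob_le_one
  | succ k ih =>
    obtain ⟨x, hxv, hxu⟩ := hsphere u v huv (k + 1) (Nat.le_add_left 1 k)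
    calc _ ≤ (D : ℝ≥0∞)⁻¹ * P {ω | SphereSumsAgree G (η · ω) u v k} :=
          measure_sphereSumsAgree_succ_le hconn hmeas hindep hunif hxv hxu
      _ ≤ (D : ℝ≥0∞)⁻¹ * (D : ℝ≥0∞)⁻¹ ^ k := by gcongr
      _ = (D : ℝ≥0∞)⁻¹ ^ (k + 1) := (pow_succ' _ _).symm

/-- Let `G` be an infinite, connected, locally finite simple graph on a
countable vertex set `V` satisfying the sphere condition. Let `D ≥ 2` and let
`η = (η_v)_{v ∈ V}` be i.i.d., each uniform on `{1, …, D}`. Then for all distinct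
`u, v ∈ V` and every `n ≥ 1`,
`P(Z_{u,i}(η) = Z_{v,i}(η) for all 1 ≤ i ≤ n) ≤ D^{-n}`. -/
theorem stmt8 {V : Type*} [Countable V] [Infinite V] (G : SimpleGraph V)
    (hconn : G.Connected) [G.LocallyFinite]
    (hsphere : ∀ u v : V, u ≠ v → ∀ r : ℕ, 1 ≤ r →
      ∃ w : V, G.dist w v = r ∧ r < G.dist w u)
    (D : ℕ) (hD : 2 ≤ D)
    {Ω : Type*} [MeasurableSpace Ω] (P : Measure Ω) [IsProbabilityMeasure P]
    (η : V → Ω → Fin D)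
    (hmeas : ∀ v : V, Measurable (η v))
    (hindep : iIndepFun η P)
    (hunif : ∀ (v : V) (s : Fin D), P {ω | η v ω = s} = (D : ℝ≥0∞)⁻¹)
    (u v : V) (huv : u ≠ v) (n : ℕ) (hn : 1 ≤ n) :
    P {ω | ∀ i : ℕ, 1 ≤ i → i ≤ n →
        sphereSum G (fun w => η w ω) u i = sphereSum G (fun w => η w ω) v i}
      ≤ (D : ℝ≥0∞)⁻¹ ^ n :=
  stmt8_general G hconn hsphere D P η hmeas hindep hunif u v huv n
end

section
/- Let G be a locally finite connected simple graph on a countable vertex set V with maximum degree Δ, 2 ≤ Δ < ∞. Let S, T be countable discrete spaces and U a measurable space; let φ : T^V → S^V and φ' : U^V → T^V be measurable (with respect to the product σ-algebras), and let Z be a U^V-valued random variable on a probability space (Ω, 𝓕, P). Suppose there exist C > 0 and ν, ν' ∈ (0,1) such that for all v ∈ V and all integers r ≥ 0, P(R_v(φ, φ'(Z)) > r) ≤ C e^{−r^ν} and P(R_v(φ', Z) > r) ≤ C e^{−r^{ν'}}. Then there exist C'' > 0 and ν'' ∈ (0,1) such that for all v ∈ V and all r ≥ 0, P(R_v(φ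 ∘ φ', Z) > r) ≤ C'' e^{−r^{ν''}}. -/
/-!
If `R_φ(φ' z, v) ≤ a` and `R_φ'(z, u) ≤ b` for every `u` in the `a`-ball around `v`, then
`R_{φ ∘ φ'}(z, v) ≤ a + b`. The `a`-ball has at most `(Δ + 1)^a` vertices, so a union bound gives
`P(R_{φ ∘ φ'} > a + b) ≤ C e^{-a^ν} + (Δ + 1)^a C e^{-b^ν'}`. Choosing `a = ⌈r^{ν'/2}⌉` and
`b = r - a`, the first term is at most `C e^{-r^{νν'/2}}`, and `b ≥ r/2` gives
`b^ν' ≥ r^ν'/2`, which for large `r` exceeds `a log(Δ + 1) + r^{νν'/2}`, so the second term is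
at most `C e^{-r^{νν'/2}}` as well. Small `r` are absorbed into the constant.
-/

open MeasureTheory

/-- The coding radius of `φ : T^V → S^V` at `y ∈ T^V` and `v ∈ V` (with respect to the
graph metric of `G`): the least `r ∈ ℕ ∪ {∞}` such that `φ y' v = φ y v` for every `y'`
agreeing with `y` on the ball `B(v, r)`; it is `∞` if no such `r` exists. -/
noncomputable def codingRadius {V T S : Type*} (G : SimpleGraph V)
    (φ : (V → T) → V → S) (y : V → T) (v : V) : ℕ∞ :=
  sInf {r : ℕ∞ | ∃ n : ℕ, r = (n : ℕ∞) ∧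
    ∀ y' : V → T, (∀ u : V, G.dist u v ≤ n → y' u = y u) → φ y' v = φ y v}

open Filter Finset

theorem codingRadius_le_iff {V T S : Type*} (G : SimpleGraph V) (φ : (V → T) → V → S)
    (y : V → T) (v : V) (n : ℕ) :
    codingRadius G φ y v ≤ n ↔
      ∀ y' : V → T, (∀ u : V, G.dist u v ≤ n → y' u = y u) → φ y' v = φ y v := by
  refine ⟨fun h => ?_, fun hn => sInf_le ⟨n, rfl, hn⟩⟩
  by_contra! hfail
  obtain ⟨y', hy', hne⟩ := hfail
  have : ((n + 1 : ℕ) : ℕ∞) ≤ codingRadius G φ y v := by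
    refine le_sInf ?_
    rintro _ ⟨m, rfl, hm⟩
    by_contra! hmn
    have hmn : m ≤ n := by norm_cast at hmn; omega
    exact hne (hm y' fun u hu => hy' u (hu.trans hmn))
  have := this.trans h
  norm_cast at this
  omega

theorem codingRadius_comp_le {V U T S : Type*} {G : SimpleGraph V} (hconn : G.Connected)
    (φ : (V → T) → V → S) (φ' : (V → U) → V → T) (z : V → U) (v : V) (a b : ℕ)
    (ha : codingRadius G φ (φ' z) v ≤ a)
    (hb : ∀ u : V, G.dist u v ≤ a → codingRadius G φ' z u ≤ b) :
    codingRadius G (φ ∘ φ') z v ≤ (a + b : ℕ) := by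
  rw [codingRadius_le_iff] at ha ⊢
  refine fun z' hz' => ha (φ' z') fun u hu => (codingRadius_le_iff G φ' z u b).mp (hb u hu) z'
    fun w hw => hz' w ?_
  calc G.dist w v ≤ G.dist w u + G.dist u v := hconn.dist_triangle
    _ ≤ a + b := by omega

theorem SimpleGraph.Connected.exists_finset_card_le_pow {V : Type*} {G : SimpleGraph V}
    [G.LocallyFinite] (hconn : G.Connected) {Δ : ℕ} (hdeg : ∀ v, G.degree v ≤ Δ) (v : V)
    (n : ℕ) : ∃ s : Finset V, (∀ u, G.dist u v ≤ n → u ∈ s) ∧ #s ≤ (Δ + 1) ^ n := by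
  classical
  induction n with
  | zero =>
    refine ⟨{v}, fun u hu => ?_, by simp⟩
    simpa using hconn.dist_eq_zero_iff.mp (Nat.le_zero.mp hu)
  | succ n ih =>
    obtain ⟨s, hs, hcard⟩ := ih
    refine ⟨s.biUnion fun w => insert w (G.neighborFinset w), fun u hu => ?_, ?_⟩
    · simp only [mem_biUnion, mem_insert, SimpleGraph.mem_neighborFinset]
      rcases Nat.lt_or_ge (G.dist u v) (n + 1) with hlt | hge
      · exact ⟨u, hs u (Nat.lt_succ_iff.mp hlt), Or.inl rfl⟩
      · obtain ⟨p, hp⟩ := hconn.exists_walk_length_eq_dist u v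
        cases p with
        | nil => rw [SimpleGraph.Walk.length_nil] at hp; omega
        | cons hadj q =>
          rw [SimpleGraph.Walk.length_cons] at hp
          exact ⟨_, hs _ (by have := SimpleGraph.dist_le q; omega), Or.inr hadj.symm⟩
    · calc #(s.biUnion fun w => insert w (G.neighborFinset w))
          ≤ ∑ w ∈ s, #(insert w (G.neighborFinset w)) := card_biUnion_le
        _ ≤ ∑ _w ∈ s, (Δ + 1) := sum_le_sum fun w _ =>
            (card_insert_le _ _).trans (Nat.add_le_add_right (hdeg w) 1)
        _ = #s * (Δ + 1) := by rw [sum_const, smul_eq_mul]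
        _ ≤ (Δ + 1) ^ (n + 1) := by rw [pow_succ]; gcongr

theorem measureReal_codingRadius_comp_lt_le {V U T S Ω : Type*} {G : SimpleGraph V}
    (hconn : G.Connected) [MeasurableSpace Ω] (P : Measure Ω) [IsFiniteMeasure P]
    (φ : (V → T) → V → S) (φ' : (V → U) → V → T) (Z : Ω → V → U) (v : V) (a b : ℕ)
    (s : Finset V) (hs : ∀ u, G.dist u v ≤ a → u ∈ s) :
    P.real {ω | ((a + b : ℕ) : ℕ∞) < codingRadius G (φ ∘ φ') (Z ω) v}
      ≤ P.real {ω | (a : ℕ∞) < codingRadius G φ (φ' (Z ω)) v}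
        + ∑ u ∈ s, P.real {ω | (b : ℕ∞) < codingRadius G φ' (Z ω) u} := by
  have hsub : {ω | ((a + b : ℕ) : ℕ∞) < codingRadius G (φ ∘ φ') (Z ω) v}
      ⊆ {ω | (a : ℕ∞) < codingRadius G φ (φ' (Z ω)) v}
        ∪ ⋃ u ∈ s, {ω | (b : ℕ∞) < codingRadius G φ' (Z ω) u} := by
    intro ω hω
    contrapose! hω
    simp only [Set.mem_union, Set.mem_iUnion, Set.mem_ofPred_eq, not_or, not_exists, not_lt]
      at hω ⊢
    exact codingRadius_comp_le hconn φ φ' (Z ω) v a b hω.1 fun u hu => hω.2 u (hs u hu)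
  calc _ ≤ _ := measureReal_mono hsub
    _ ≤ _ := measureReal_union_le _ _
    _ ≤ _ := by gcongr; exact measureReal_biUnion_finset_le _ _

theorem rpow_split_estimates {L ν ν' x a : ℝ} (hL : 0 ≤ L) (hν : 0 ≤ ν) (hν1 : ν ≤ 1)
    (hν' : 0 ≤ ν') (hν'1 : ν' ≤ 1) (hx : 1 ≤ x) (hxL : 4 * L + 4 ≤ x ^ (ν' / 2))
    (ha : x ^ (ν' / 2) ≤ a) (ha' : a ≤ x ^ (ν' / 2) + 1) :
    a ≤ x / 2 ∧ x ^ (ν * ν' / 2) ≤ a ^ ν ∧ a * L + x ^ (ν * ν' / 2) ≤ (x - a) ^ ν' := by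
  set y := x ^ (ν' / 2)
  have hx0 : 0 ≤ x := by linarith
  have hy_sq : y * y = x ^ ν' := by rw [← Real.rpow_add (by linarith)]; ring_nf
  have hxν' : x ^ ν' ≤ x := Real.rpow_le_self_of_one_le hx hν'1
  have ha_half : a ≤ x / 2 := by nlinarith
  have hsmall : x ^ (ν * ν' / 2) ≤ y :=
    Real.rpow_le_rpow_of_exponent_le hx (by nlinarith)
  have hhalf : x ^ ν' / 2 ≤ (x - a) ^ ν' := by
    have h2 : (2 : ℝ) ^ ν' ≤ 2 := Real.rpow_le_self_of_one_le one_le_two hν'1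
    calc x ^ ν' / 2 ≤ x ^ ν' / 2 ^ ν' := by gcongr
      _ = (x / 2) ^ ν' := (Real.div_rpow hx0 zero_le_two _).symm
      _ ≤ (x - a) ^ ν' := by gcongr; linarith
  refine ⟨ha_half, ?_, by nlinarith⟩
  calc x ^ (ν * ν' / 2) = y ^ ν := by rw [← Real.rpow_mul hx0]; ring_nf
    _ ≤ a ^ ν := by gcongr

theorem eventually_exists_split_tail_le (Δ : ℕ) {C ν ν' : ℝ} (hC : 0 ≤ C) (hν : 0 ≤ ν)
    (hν1 : ν ≤ 1) (hν' : 0 < ν') (hν'1 : ν' ≤ 1) :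
    ∀ᶠ r : ℕ in atTop, ∃ a b : ℕ, a + b = r ∧
      C * Real.exp (-(a : ℝ) ^ ν) + ((Δ : ℝ) + 1) ^ a * (C * Real.exp (-(b : ℝ) ^ ν'))
        ≤ 2 * C * Real.exp (-(r : ℝ) ^ (ν * ν' / 2)) := by
  set L := Real.log ((Δ : ℝ) + 1)
  have hL : 0 ≤ L := Real.log_nonneg (by simp)
  have hlarge : ∀ᶠ r : ℕ in atTop, 4 * L + 4 ≤ (r : ℝ) ^ (ν' / 2) :=
    ((tendsto_rpow_atTop (by positivity)).comp tendsto_natCast_atTop_atTop).eventually_ge_atTop _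
  filter_upwards [hlarge, eventually_ge_atTop 1] with r hrL hr1
  have hx : (1 : ℝ) ≤ r := by exact_mod_cast hr1
  set a := ⌈(r : ℝ) ^ (ν' / 2)⌉₊
  obtain ⟨ha_half, ha_exp, hb_exp⟩ := rpow_split_estimates hL hν hν1 hν'.le hν'1 hx hrL
    (Nat.le_ceil _) (Nat.ceil_lt_add_one (by positivity)).le
  have har : a ≤ r := by
    have : (a : ℝ) ≤ r := by linarith
    exact_mod_cast this
  refine ⟨a, r - a, Nat.add_sub_cancel' har, ?_⟩
  have hpow : ((Δ : ℝ) + 1) ^ a = Real.exp (a * L) := by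
    rw [← Real.exp_log (show (0 : ℝ) < Δ + 1 by positivity), ← Real.exp_nat_mul]
  have hfirst : C * Real.exp (-(a : ℝ) ^ ν) ≤ C * Real.exp (-(r : ℝ) ^ (ν * ν' / 2)) := by
    gcongr
  have hsecond : ((Δ : ℝ) + 1) ^ a * (C * Real.exp (-((r - a : ℕ) : ℝ) ^ ν'))
      ≤ C * Real.exp (-(r : ℝ) ^ (ν * ν' / 2)) := by
    rw [hpow, mul_left_comm, ← Real.exp_add, Nat.cast_sub har]
    gcongr
    linarith
  linarith

theorem exists_le_mul_exp_neg_rpow_of_eventually {ι : Type*} {f : ι → ℕ → ℝ} {K p : ℝ}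
    (hp : 0 ≤ p) (hf : ∀ i r, f i r ≤ 1)
    (hev : ∀ᶠ r : ℕ in atTop, ∀ i, f i r ≤ K * Real.exp (-(r : ℝ) ^ p)) :
    ∃ K' > 0, ∀ i r, f i r ≤ K' * Real.exp (-(r : ℝ) ^ p) := by
  obtain ⟨r₀, hr₀⟩ := eventually_atTop.mp hev
  refine ⟨max K (Real.exp ((r₀ : ℝ) ^ p)), lt_max_of_lt_right (Real.exp_pos _), fun i r => ?_⟩
  rcases le_or_gt r₀ r with hr | hr
  · exact (hr₀ r hr i).trans (by gcongr; exact le_max_left _ _)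
  · calc f i r ≤ Real.exp ((r : ℝ) ^ p) * Real.exp (-(r : ℝ) ^ p) := by
          rw [← Real.exp_add, add_neg_cancel, Real.exp_zero]; exact hf i r
      _ ≤ max K (Real.exp ((r₀ : ℝ) ^ p)) * Real.exp (-(r : ℝ) ^ p) := by
          gcongr
          exact le_max_of_le_right (by gcongr)

theorem stmt12_general {V T S U : Type*}
    (G : SimpleGraph V) (hconn : G.Connected) [G.LocallyFinite]
    (Δ : ℕ) (hdeg : ∀ v : V, G.degree v ≤ Δ)
    {Ω : Type*} [MeasurableSpace Ω] (P : Measure Ω) [IsProbabilityMeasure P]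
    (φ : (V → T) → V → S) (φ' : (V → U) → V → T)
    (Z : Ω → V → U)
    (C ν ν' : ℝ) (hC : 0 < C) (hν : 0 < ν) (hν1 : ν < 1) (hν' : 0 < ν') (hν'1 : ν' < 1)
    (hbound1 : ∀ (v : V) (r : ℕ),
      (P {ω | (r : ℕ∞) < codingRadius G φ (φ' (Z ω)) v}).toReal
        ≤ C * Real.exp (-(r : ℝ) ^ ν))
    (hbound2 : ∀ (v : V) (r : ℕ),
      (P {ω | (r : ℕ∞) < codingRadius G φ' (Z ω) v}).toReal
        ≤ C * Real.exp (-(r : ℝ) ^ ν')) :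
    ∃ C'' ν'' : ℝ, 0 < C'' ∧ 0 < ν'' ∧ ν'' < 1 ∧ ∀ (v : V) (r : ℕ),
      (P {ω | (r : ℕ∞) < codingRadius G (φ ∘ φ') (Z ω) v}).toReal
        ≤ C'' * Real.exp (-(r : ℝ) ^ ν'') := by
  have htail : ∀ᶠ r : ℕ in atTop, ∀ v,
      P.real {ω | (r : ℕ∞) < codingRadius G (φ ∘ φ') (Z ω) v}
        ≤ 2 * C * Real.exp (-(r : ℝ) ^ (ν * ν' / 2)) := by
    filter_upwards [eventually_exists_split_tail_le Δ hC.le hν.le hν1.le hν' hν'1.le]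
      with r ⟨a, b, hab, hsplit⟩ v
    subst hab
    obtain ⟨s, hs, hcard⟩ := hconn.exists_finset_card_le_pow hdeg v a
    have hcard' : (#s : ℝ) ≤ ((Δ : ℝ) + 1) ^ a := by exact_mod_cast hcard
    calc _ ≤ P.real {ω | (a : ℕ∞) < codingRadius G φ (φ' (Z ω)) v}
          + ∑ u ∈ s, P.real {ω | (b : ℕ∞) < codingRadius G φ' (Z ω) u} :=
          measureReal_codingRadius_comp_lt_le hconn P φ φ' Z v a b s hs
      _ ≤ C * Real.exp (-(a : ℝ) ^ ν) + #s * (C * Real.exp (-(b : ℝ) ^ ν')) := by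
          rw [← nsmul_eq_mul, ← sum_const]
          exact add_le_add (hbound1 v a) (sum_le_sum fun u _ => hbound2 u b)
      _ ≤ _ := by grw [hcard']; exact hsplit
  obtain ⟨C'', hC'', hle⟩ := exists_le_mul_exp_neg_rpow_of_eventually (by positivity)
    (fun _ _ => measureReal_le_one) htail
  exact ⟨C'', ν * ν' / 2, hC'', by positivity, by nlinarith, hle⟩

/-- Composition of finitary codings with stretched-exponential tails on
the coding radius again has stretched-exponential tails: if
`P(R_v(φ, φ'(Z)) > r) ≤ C e^{-r^ν}` and `P(R_v(φ', Z) > r) ≤ C e^{-r^{ν'}}` for all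
`v ∈ V` and `r ≥ 0` with `ν, ν' ∈ (0,1)`, on a graph of maximum degree `Δ` with
`2 ≤ Δ < ∞`, then there are `C'' > 0` and `ν'' ∈ (0,1)` such that
`P(R_v(φ ∘ φ', Z) > r) ≤ C'' e^{-r^{ν''}}` for all `v` and `r`. -/
theorem stmt12 {V T S U : Type*} [Countable V] [Countable T] [Countable S]
    [MeasurableSpace T] [MeasurableSingletonClass T]
    [MeasurableSpace S] [MeasurableSingletonClass S]
    [MeasurableSpace U]
    (G : SimpleGraph V) (hconn : G.Connected) [G.LocallyFinite]
    (Δ : ℕ) (hΔ2 : 2 ≤ Δ) (hdeg : ∀ v : V, G.degree v ≤ Δ)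
    {Ω : Type*} [MeasurableSpace Ω] (P : Measure Ω) [IsProbabilityMeasure P]
    (φ : (V → T) → V → S) (φ' : (V → U) → V → T)
    (hφ : Measurable φ) (hφ' : Measurable φ')
    (Z : Ω → V → U) (hZ : Measurable Z)
    (C ν ν' : ℝ) (hC : 0 < C) (hν : 0 < ν) (hν1 : ν < 1) (hν' : 0 < ν') (hν'1 : ν' < 1)
    (hbound1 : ∀ (v : V) (r : ℕ),
      (P {ω | (r : ℕ∞) < codingRadius G φ (φ' (Z ω)) v}).toReal
        ≤ C * Real.exp (-(r : ℝ) ^ ν))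
    (hbound2 : ∀ (v : V) (r : ℕ),
      (P {ω | (r : ℕ∞) < codingRadius G φ' (Z ω) v}).toReal
        ≤ C * Real.exp (-(r : ℝ) ^ ν')) :
    ∃ C'' ν'' : ℝ, 0 < C'' ∧ 0 < ν'' ∧ ν'' < 1 ∧ ∀ (v : V) (r : ℕ),
      (P {ω | (r : ℕ∞) < codingRadius G (φ ∘ φ') (Z ω) v}).toReal
        ≤ C'' * Real.exp (-(r : ℝ) ^ ν'') :=
  stmt12_general G hconn Δ hdeg P φ φ' Z C ν ν' hC hν hν1 hν' hν'1 hbound1 hbound2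
end
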